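/- arXiv:2404.05531 — 4 statements merged into one kernel-verified Lean document; each statement's English description precedes it below -/
import Mathlib

section
/- Let f be a real function differentiable on [ξ₀, ξ*] with f(ξ*) = 0, such that f'(ξ) < 0 for all ξ ∈ [ξ₀, ξ*) and f' is monotonically increasing on [ξ₀, ξ*). Then the Newton–Raphson iteration ξ_{n+1} = ξ_n − f(ξ_n)/f'(ξ_n) started at ξ₀ produces a monotonically increasing sequence that converges to ξ*. -/
/-!
By the mean value theorem, for `a < ξs` in the interval we have `f a = f' c * (a - ξs)` with
`a < c < ξs`, so `f a > 0`, and since `f' a ≤ f' c < 0` also `f a ≤ f' a * (a - ξs)`. Hence the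
Newton step from `a` lands in `[a, ξs]`, and the iterates increase and stay below `ξs`. Their limit
`L` is a root of `f`: `f (x n) = f' (x n) * (x n - x (n + 1))` with `f' (x n)` bounded by `|f' ξ₀|`,
so `f (x n) → 0`. A limit `L < ξs` would have `f L > 0`, so `L = ξs`.
-/

open Set Filter Topology

noncomputable def newtonMap (f f' : ℝ → ℝ) (x : ℝ) : ℝ := x - f x / f' x

theorem deriv_mul_sub_newtonMap {f f' : ℝ → ℝ} {a : ℝ} (ha : f' a ≠ 0) :
    f' a * (a - newtonMap f f' a) = f a := by
  rw [newtonMap, sub_sub_cancel, mul_div_cancel₀ _ ha]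

theorem le_newtonMap {f f' : ℝ → ℝ} {a : ℝ} (hf : 0 ≤ f a) (hf' : f' a ≤ 0) :
    a ≤ newtonMap f f' a :=
  le_sub_self_iff _ |>.mpr (div_nonpos_of_nonneg_of_nonpos hf hf')

theorem newtonMap_le {f f' : ℝ → ℝ} {a b : ℝ} (hf' : f' a < 0) (hf : f a ≤ f' a * (a - b)) :
    newtonMap f f' a ≤ b := by
  have : a - b ≤ f a / f' a := by rwa [le_div_iff_of_neg hf', mul_comm]
  rw [newtonMap]
  linarith

theorem exists_mem_Ioo_eq_deriv_mul_sub_of_root {f f' : ℝ → ℝ} {a b : ℝ} (hab : a < b)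
    (hderiv : ∀ ξ ∈ Icc a b, HasDerivAt f (f' ξ) ξ) (hroot : f b = 0) :
    ∃ c ∈ Ioo a b, f a = f' c * (a - b) := by
  obtain ⟨c, hc, hslope⟩ := exists_hasDerivAt_eq_slope f f' hab
    (fun ξ hξ => (hderiv ξ hξ).continuousAt.continuousWithinAt)
    (fun ξ hξ => hderiv ξ (Ioo_subset_Icc_self hξ))
  refine ⟨c, hc, ?_⟩
  rw [hslope, hroot]
  field_simp [sub_ne_zero.mpr hab.ne']
  ring

theorem pos_of_deriv_neg_of_root {f f' : ℝ → ℝ} {a b : ℝ} (hab : a < b)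
    (hderiv : ∀ ξ ∈ Icc a b, HasDerivAt f (f' ξ) ξ) (hroot : f b = 0)
    (hneg : ∀ ξ ∈ Ioo a b, f' ξ < 0) : 0 < f a := by
  obtain ⟨c, hc, hfa⟩ := exists_mem_Ioo_eq_deriv_mul_sub_of_root hab hderiv hroot
  rw [hfa]
  exact mul_pos_of_neg_of_neg (hneg c hc) (sub_neg.mpr hab)

theorem le_deriv_mul_sub_of_root {f f' : ℝ → ℝ} {a b : ℝ} (hab : a < b)
    (hderiv : ∀ ξ ∈ Icc a b, HasDerivAt f (f' ξ) ξ) (hroot : f b = 0)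
    (hmin : ∀ ξ ∈ Ioo a b, f' a ≤ f' ξ) : f a ≤ f' a * (a - b) := by
  obtain ⟨c, hc, hfa⟩ := exists_mem_Ioo_eq_deriv_mul_sub_of_root hab hderiv hroot
  rw [hfa]
  exact mul_le_mul_of_nonpos_right (hmin c hc) (sub_nonpos.mpr hab.le)

theorem pos_of_mem_Ico_of_root {f f' : ℝ → ℝ} {ξ₀ ξs a : ℝ}
    (hderiv : ∀ ξ ∈ Icc ξ₀ ξs, HasDerivAt f (f' ξ) ξ) (hroot : f ξs = 0)
    (hneg : ∀ ξ ∈ Ico ξ₀ ξs, f' ξ < 0) (ha : a ∈ Ico ξ₀ ξs) : 0 < f a :=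
  pos_of_deriv_neg_of_root ha.2 (fun ξ hξ => hderiv ξ (Icc_subset_Icc_left ha.1 hξ)) hroot
    fun ξ hξ => hneg ξ ⟨ha.1.trans hξ.1.le, hξ.2⟩

theorem newtonMap_mem_Icc {f f' : ℝ → ℝ} {ξ₀ ξs a : ℝ}
    (hderiv : ∀ ξ ∈ Icc ξ₀ ξs, HasDerivAt f (f' ξ) ξ) (hroot : f ξs = 0)
    (hneg : ∀ ξ ∈ Ico ξ₀ ξs, f' ξ < 0) (hmono : MonotoneOn f' (Ico ξ₀ ξs))
    (ha : a ∈ Icc ξ₀ ξs) : newtonMap f f' a ∈ Icc a ξs := by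
  obtain rfl | has := ha.2.eq_or_lt
  · simp [newtonMap, hroot]
  have haIco : a ∈ Ico ξ₀ ξs := ⟨ha.1, has⟩
  refine ⟨le_newtonMap (pos_of_mem_Ico_of_root hderiv hroot hneg haIco).le (hneg a haIco).le,
    newtonMap_le (hneg a haIco) ?_⟩
  exact le_deriv_mul_sub_of_root has (fun ξ hξ => hderiv ξ (Icc_subset_Icc_left ha.1 hξ)) hroot
    fun ξ hξ => hmono haIco ⟨ha.1.trans hξ.1.le, hξ.2⟩ hξ.1.le

theorem eq_zero_of_tendsto_newtonMap {f f' : ℝ → ℝ} {x : ℕ → ℝ} {L C : ℝ}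
    (hx : Tendsto x atTop (𝓝 L)) (hxrec : ∀ n, x (n + 1) = newtonMap f f' (x n))
    (hf : ContinuousAt f L) (hne : ∀ n, f' (x n) ≠ 0) (hbound : ∀ n, |f' (x n)| ≤ C) :
    f L = 0 := by
  have hstep : Tendsto (fun n => x n - x (n + 1)) atTop (𝓝 0) := by
    simpa using hx.sub (hx.comp (tendsto_add_atTop_nat 1))
  have hfx : Tendsto (fun n => f (x n)) atTop (𝓝 0) := by
    refine squeeze_zero_norm (fun n => ?_) (by simpa using hstep.norm.const_mul C)
    rw [← deriv_mul_sub_newtonMap (f := f) (hne n), ← hxrec, norm_mul]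
    exact mul_le_mul_of_nonneg_right (hbound n) (norm_nonneg _)
  exact tendsto_nhds_unique (hf.tendsto.comp hx) hfx

/-- Newton–Raphson with negative, monotonically increasing derivative on `[ξ₀, ξ*)`:
the iteration is monotonically increasing and converges to the root `ξ*`. -/
theorem newton_neg_incr_deriv_converges
    (f f' : ℝ → ℝ) (ξ₀ ξs : ℝ)
    (hle : ξ₀ ≤ ξs)
    (hderiv : ∀ ξ ∈ Set.Icc ξ₀ ξs, HasDerivAt f (f' ξ) ξ)
    (hroot : f ξs = 0)
    (hneg : ∀ ξ ∈ Set.Ico ξ₀ ξs, f' ξ < 0)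
    (hmono : MonotoneOn f' (Set.Ico ξ₀ ξs))
    (x : ℕ → ℝ) (hx0 : x 0 = ξ₀)
    (hxrec : ∀ n, x (n + 1) = x n - f (x n) / f' (x n)) :
    Monotone x ∧ Filter.Tendsto x Filter.atTop (nhds ξs) := by
  have hstep n (hn : x n ∈ Icc ξ₀ ξs) : x (n + 1) ∈ Icc (x n) ξs :=
    hxrec n ▸ newtonMap_mem_Icc hderiv hroot hneg hmono hn
  have hmem : ∀ n, x n ∈ Icc ξ₀ ξs := fun n => by
    induction n with
    | zero => rw [hx0]; exact ⟨le_rfl, hle⟩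
    | succ n hn => exact Icc_subset_Icc_left hn.1 (hstep n hn)
  have hxmono : Monotone x := monotone_nat_of_le_succ fun n => (hstep n (hmem n)).1
  have hL := tendsto_atTop_ciSup hxmono ⟨ξs, forall_mem_range.mpr fun n => (hmem n).2⟩
  set L := ⨆ n, x n
  refine ⟨hxmono, ?_⟩
  obtain hLs | hLs := (le_of_tendsto' hL fun n => (hmem n).2).eq_or_lt
  · rwa [← hLs]
  have hxIco n : x n ∈ Ico ξ₀ ξs := ⟨(hmem n).1, (hxmono.ge_of_tendsto hL n).trans_lt hLs⟩
  have hξ₀L : ξ₀ ≤ L := hx0 ▸ hxmono.ge_of_tendsto hL 0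
  have hbound n : |f' (x n)| ≤ -f' ξ₀ := by
    have := hmono ⟨le_rfl, hξ₀L.trans_lt hLs⟩ (hxIco n) (hxIco n).1
    rw [abs_of_neg (hneg _ (hxIco n))]
    linarith
  have hfL : f L = 0 := eq_zero_of_tendsto_newtonMap hL hxrec
    (hderiv L ⟨hξ₀L, hLs.le⟩).continuousAt (fun n => (hneg _ (hxIco n)).ne) hbound
  exact absurd hfL (pos_of_mem_Ico_of_root hderiv hroot hneg ⟨hξ₀L, hLs⟩).ne'
end

section
/- Let f be a real function differentiable on [ξ₀, ξ*] with f(ξ*) = 0, such that f'(ξ) > 0 for all ξ ∈ [ξ₀, ξ*) and f' is monotonically decreasing on [ξ₀, ξ*). Then the Newton–Raphson iteration started at ξ₀ produces a monotonically increasing sequence converging to ξ*. -/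
/-- Newton–Raphson with positive, monotonically decreasing derivative on `[ξ₀, ξ*)`:
the iteration is monotonically increasing and converges to the root `ξ*`. -/
theorem newton_pos_decr_deriv_converges
    (f f' : ℝ → ℝ) (ξ₀ ξs : ℝ)
    (hle : ξ₀ ≤ ξs)
    (hderiv : ∀ ξ ∈ Set.Icc ξ₀ ξs, HasDerivAt f (f' ξ) ξ)
    (hroot : f ξs = 0)
    (hpos : ∀ ξ ∈ Set.Ico ξ₀ ξs, 0 < f' ξ)
    (hanti : AntitoneOn f' (Set.Ico ξ₀ ξs))
    (x : ℕ → ℝ) (hx0 : x 0 = ξ₀)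
    (hxrec : ∀ n, x (n + 1) = x n - f (x n) / f' (x n)) :
    Monotone x ∧ Filter.Tendsto x Filter.atTop (nhds ξs) := by
  by_cases heq : ξ₀ = ξs
  · subst heq
    have hx : ∀ n, x n = ξ₀ := by
      intro n; induction n with
      | zero => exact hx0
      | succ n ih => rw [hxrec, ih, hroot]; simp
    have hxc : x = fun _ => ξ₀ := funext hx
    constructor
    · intro m n h; rw [hx m, hx n]
    · rw [hxc]; exact tendsto_const_nhds
  · have hlt : ξ₀ < ξs := lt_of_le_of_ne hle heq
    have hcont : ContinuousOn f (Set.Icc ξ₀ ξs) := fun ξ hξ =>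
      ((hderiv ξ hξ).continuousAt).continuousWithinAt
    have key : ∀ a, ξ₀ ≤ a → a < ξs → f a < 0 ∧ a - f a / f' a ≤ ξs := by
      intro a ha halt
      obtain ⟨c, hc, hceq⟩ := exists_hasDerivAt_eq_slope f f' halt
        (hcont.mono (Set.Icc_subset_Icc ha le_rfl))
        (fun y hy => hderiv y ⟨le_trans ha hy.1.le, hy.2.le⟩)
      rw [hroot, zero_sub] at hceq
      have hc0 : ξ₀ ≤ c := le_trans ha hc.1.le
      have hfc : 0 < f' c := hpos c ⟨hc0, hc.2⟩
      have hsub : 0 < ξs - a := sub_pos.mpr halt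
      have hval : -f a = f' c * (ξs - a) := (div_eq_iff hsub.ne').mp hceq.symm
      have hfa : f a < 0 := by nlinarith
      have hfa' : 0 < f' a := hpos a ⟨ha, halt⟩
      have hca : f' c ≤ f' a := hanti ⟨ha, halt⟩ ⟨hc0, hc.2⟩ hc.1.le
      refine ⟨hfa, ?_⟩
      have h1 : -f a / f' a ≤ ξs - a := by
        rw [div_le_iff₀ hfa']; nlinarith
      have h2 : a - f a / f' a = a + -f a / f' a := by ring
      linarith [h2.le, h2.ge]
    have inv : ∀ n, ξ₀ ≤ x n ∧ x n ≤ ξs := by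
      intro n; induction n with
      | zero => rw [hx0]; exact ⟨le_rfl, hle⟩
      | succ n ih =>
        rcases eq_or_lt_of_le ih.2 with h | h
        · rw [hxrec, h, hroot]; constructor <;> simp [hle]
        · obtain ⟨hfa, hstep⟩ := key _ ih.1 h
          have hfa' := hpos _ ⟨ih.1, h⟩
          refine ⟨?_, by rw [hxrec]; exact hstep⟩
          rw [hxrec]
          have : f (x n) / f' (x n) ≤ 0 := div_nonpos_of_nonpos_of_nonneg hfa.le hfa'.le
          linarith [ih.1]
    have hmono : Monotone x := by
      apply monotone_nat_of_le_succ
      intro n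
      rcases eq_or_lt_of_le (inv n).2 with h | h
      · rw [hxrec, h, hroot]; simp
      · have hfa := (key _ (inv n).1 h).1
        have hfa' := hpos _ ⟨(inv n).1, h⟩
        rw [hxrec]
        have : f (x n) / f' (x n) ≤ 0 := div_nonpos_of_nonpos_of_nonneg hfa.le hfa'.le
        linarith
    have hbdd : BddAbove (Set.range x) := ⟨ξs, by rintro _ ⟨n, rfl⟩; exact (inv n).2⟩
    have hL : Filter.Tendsto x Filter.atTop (nhds (⨆ n, x n)) :=
      tendsto_atTop_ciSup hmono hbdd
    set L := ⨆ n, x n with hLdef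
    have hxle : ∀ n, x n ≤ L := fun n => le_ciSup hbdd n
    have hL0 : ξ₀ ≤ L := hx0 ▸ hxle 0
    have hLs : L ≤ ξs := ciSup_le fun n => (inv n).2
    have hLeq : L = ξs := by
      by_contra hne
      have hLlt : L < ξs := lt_of_le_of_ne hLs hne
      have hfL : f L < 0 := (key L hL0 hLlt).1
      have hf0 : 0 < f' ξ₀ := hpos ξ₀ ⟨le_rfl, hlt⟩
      have hlow : ∀ n, -f (x n) / f' ξ₀ ≤ x (n + 1) - x n := by
        intro n
        have hxn : x n < ξs := lt_of_le_of_lt (hxle n) hLlt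
        have hfa := (key _ (inv n).1 hxn).1
        have hfa' := hpos _ ⟨(inv n).1, hxn⟩
        have hle' : f' (x n) ≤ f' ξ₀ := hanti ⟨le_rfl, hlt⟩ ⟨(inv n).1, hxn⟩ (inv n).1
        rw [hxrec]
        have h1 : -f (x n) / f' ξ₀ ≤ -f (x n) / f' (x n) := by
          apply div_le_div_of_nonneg_left (by linarith) hfa' hle'
        have h2 : x n - f (x n) / f' (x n) - x n = -f (x n) / f' (x n) := by ring
        linarith
      have hdiff : Filter.Tendsto (fun n => x (n + 1) - x n) Filter.atTop (nhds 0) := by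
        have h1 : Filter.Tendsto (fun n => x (n + 1)) Filter.atTop (nhds L) :=
          hL.comp (Filter.tendsto_add_atTop_nat 1)
        simpa using h1.sub hL
      have hcontL : Filter.Tendsto (fun n => -f (x n) / f' ξ₀) Filter.atTop
          (nhds (-f L / f' ξ₀)) := by
        have hc : ContinuousAt f L := (hderiv L ⟨hL0, hLs⟩).continuousAt
        exact ((hc.tendsto.comp hL).neg).div_const _
      have hle0 : -f L / f' ξ₀ ≤ 0 := le_of_tendsto_of_tendsto' hcontL hdiff hlow
      have : 0 < -f L / f' ξ₀ := div_pos (by linarith) hf0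
      linarith
    rw [hLeq] at hL
    exact ⟨hmono, hL⟩
end

section
/- Let P, Q, ξ, η be reals with P ≥ 0, Q ≥ 0, P + Q < 1, ξ > 0, and η > ξ. Define the 2×2 symmetric matrix A with A₁₁ = 6P² + 12Q² + 15P(Q−1) − 24Q + 12, A₂₂ = 8P² + 16Q² + 15Q(P−1) − 16P + 8, and A₁₂ = A₂₁ = −7P² − (27/2)Q² − 16P(Q−1) + (45/2)Q − 9. Then the quadratic form (ξ, η) A (ξ, η)ᵀ is nonnegative; in particular A₁₁ ≥ 0 and det(A) ≥ 0 for all (P,Q) ∈ [0,1]². -/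
/-- `A₁₁ ≥ 0` always, as a PSD quadratic form in `(P, Q-1)`. -/
lemma A11_nonneg_aux (P Q : ℝ) :
    0 ≤ 6 * P ^ 2 + 12 * Q ^ 2 + 15 * P * (Q - 1) - 24 * Q + 12 := by
  nlinarith [sq_nonneg (12 * P + 15 * (Q - 1)), sq_nonneg (Q - 1)]

/-- `det A ≥ 0` on the unit square, via explicit Positivstellensatz certificates
on the two regions `P + Q ≤ 1` and `P + Q ≥ 1`. -/
lemma detA_nonneg_aux (P Q : ℝ) (hP : 0 ≤ P) (hP1 : P ≤ 1) (hQ : 0 ≤ Q) (hQ1 : Q ≤ 1) :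
    0 ≤ (6 * P ^ 2 + 12 * Q ^ 2 + 15 * P * (Q - 1) - 24 * Q + 12)
          * (8 * P ^ 2 + 16 * Q ^ 2 + 15 * Q * (P - 1) - 16 * P + 8)
        - (-7 * P ^ 2 - (27 / 2) * Q ^ 2 - 16 * P * (Q - 1) + (45 / 2) * Q - 9) ^ 2 := by
  rcases le_total (P + Q) 1 with h | h
  · have hs : 0 ≤ 1 - P - Q := by linarith
    nlinarith [mul_nonneg (mul_nonneg hQ (by linarith : (0:ℝ) ≤ 1 - Q)) hs,
      sq_nonneg (Q * (1 - Q)), mul_nonneg hQ (sq_nonneg (1 - P - Q)),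
      mul_nonneg hP (mul_nonneg hs (sq_nonneg (1 - P - Q))),
      sq_nonneg (1 - P - Q),
      mul_nonneg hQ (mul_nonneg hs (sq_nonneg (1 - P - Q))),
      mul_nonneg (sq_nonneg (1 - Q)) (sq_nonneg (1 - P - Q)),
      mul_nonneg (mul_nonneg (sq_nonneg Q) (by linarith : (0:ℝ) ≤ 1 - Q)) hs,
      mul_nonneg hP (sq_nonneg (1 - P - Q))]
  · have hs : 0 ≤ P + Q - 1 := by linarith
    nlinarith [mul_nonneg (mul_nonneg hQ (by linarith : (0:ℝ) ≤ 1 - Q)) (sq_nonneg (P + Q - 1)),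
      mul_nonneg (sq_nonneg (3 * P + 2 * Q - 3)) (sq_nonneg (1 - Q)),
      mul_nonneg hs (sq_nonneg (P + Q - 1)),
      mul_nonneg hQ (sq_nonneg (P + Q - 1)),
      mul_nonneg (sq_nonneg (2 * P + Q - 2)) (sq_nonneg (1 - Q)),
      mul_nonneg (sq_nonneg (3 * P + 4 * Q - 4)) (sq_nonneg (1 - P)),
      sq_nonneg ((P + Q - 1) ^ 2),
      mul_nonneg (sq_nonneg (4 * P + 5 * Q - 5)) (sq_nonneg (1 - P)),
      mul_nonneg (mul_nonneg (by linarith : (0:ℝ) ≤ 1 - P) hs) (sq_nonneg (P + Q - 1))]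

/-- The symmetric matrix `A` arising in the proof of the crucial inequality: its quadratic
form in `(ξ, η)` is nonnegative under the stated constraints, and `A₁₁ ≥ 0` and
`det A ≥ 0` hold for all `(P,Q) ∈ [0,1]²`. -/
theorem quadratic_form_A_nonneg (P Q ξ η : ℝ)
    (hP : 0 ≤ P) (hQ : 0 ≤ Q) (hPQ : P + Q < 1) (hξ : 0 < ξ) (hη : ξ < η) :
    0 ≤ (6 * P ^ 2 + 12 * Q ^ 2 + 15 * P * (Q - 1) - 24 * Q + 12) * ξ ^ 2
        + 2 * (-7 * P ^ 2 - (27 / 2) * Q ^ 2 - 16 * P * (Q - 1) + (45 / 2) * Q - 9) * ξ * η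
        + (8 * P ^ 2 + 16 * Q ^ 2 + 15 * Q * (P - 1) - 16 * P + 8) * η ^ 2 ∧
    ∀ P' Q' : ℝ, 0 ≤ P' → P' ≤ 1 → 0 ≤ Q' → Q' ≤ 1 →
      0 ≤ 6 * P' ^ 2 + 12 * Q' ^ 2 + 15 * P' * (Q' - 1) - 24 * Q' + 12 ∧
      0 ≤ (6 * P' ^ 2 + 12 * Q' ^ 2 + 15 * P' * (Q' - 1) - 24 * Q' + 12)
            * (8 * P' ^ 2 + 16 * Q' ^ 2 + 15 * Q' * (P' - 1) - 16 * P' + 8)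
          - (-7 * P' ^ 2 - (27 / 2) * Q' ^ 2 - 16 * P' * (Q' - 1) + (45 / 2) * Q' - 9) ^ 2 := by
  refine ⟨?_, fun P' Q' hP' hP1' hQ' hQ1' => ⟨A11_nonneg_aux P' Q', detA_nonneg_aux P' Q' hP' hP1' hQ' hQ1'⟩⟩
  have hdet := detA_nonneg_aux P Q hP (by linarith) hQ (by linarith)
  have hA11 : 0 < 6 * P ^ 2 + 12 * Q ^ 2 + 15 * P * (Q - 1) - 24 * Q + 12 := by
    nlinarith [sq_nonneg (12 * P + 15 * (Q - 1)),
      mul_pos (by linarith : (0:ℝ) < 1 - Q) (by linarith : (0:ℝ) < 1 - Q)]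
  nlinarith [hA11, hdet,
    sq_nonneg ((6 * P ^ 2 + 12 * Q ^ 2 + 15 * P * (Q - 1) - 24 * Q + 12) * ξ
      + (-7 * P ^ 2 - (27 / 2) * Q ^ 2 - 16 * P * (Q - 1) + (45 / 2) * Q - 9) * η),
    mul_nonneg hdet (sq_nonneg η)]
end

section
/- Consider an equation of state h = H(ρ, p) satisfying H(ρ,p) ≥ √(1 + p²/ρ²) + p/ρ for all ρ, p > 0. For the relativistic state with Lorentz factor W ≥ 1, velocity |v| < 1, magnetic field B, define E = ρhW² − p_tot + |B|², where p_tot = p + (1/2)(W^{-2}|B|² + (v·B)²), and ξ* = ρhW². Then ξ* < 2E − |B|². -/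
/-!
Substituting `W⁻² = 1 - |v|²` into `E` gives
`2E - |B|² - ρhW² = (ρhW² - 2p) + (|v|²|B|² - (v·B)²)`.
The second bracket is nonnegative by Cauchy–Schwarz. For the first, the kinetic-theory bound
gives `h ≥ √(1 + x²) + x > 2x` with `x = p/ρ`, so `ρh > 2p`; and `h > 0` with `W² ≥ 1`
gives `ρhW² ≥ ρh`.
-/

open Real

lemma two_mul_lt_sqrt_one_add_sq_add (x : ℝ) : 2 * x < √(1 + x ^ 2) + x := by
  have : x < √(1 + x ^ 2) := lt_sqrt_of_sq_lt (by linarith)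
  linarith

lemma enthalpy_pos_and_two_mul_pressure_lt {ρ p h : ℝ} (hρ : 0 < ρ)
    (hh : √(1 + p ^ 2 / ρ ^ 2) + p / ρ ≤ h) : 0 < h ∧ 2 * p < ρ * h := by
  rw [← div_pow] at hh
  have h_pos : 0 < √(1 + (p / ρ) ^ 2) + p / ρ := by
    rw [add_comm, ← exp_arsinh]
    exact exp_pos _
  have h_gt : 2 * (p / ρ) < h := (two_mul_lt_sqrt_one_add_sq_add _).trans_le hh
  refine ⟨h_pos.trans_le hh, ?_⟩
  calc 2 * p = ρ * (2 * (p / ρ)) := by field_simp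
    _ < ρ * h := mul_lt_mul_of_pos_left h_gt hρ

lemma inv_sq_eq_of_eq_one_div_sqrt {s W : ℝ} (hs : s < 1) (hW : W = 1 / √(1 - s)) :
    (W ^ 2)⁻¹ = 1 - s := by
  rw [hW, div_pow, one_pow, sq_sqrt (by linarith), one_div, inv_inv]

lemma one_le_sq_of_eq_one_div_sqrt {s W : ℝ} (hs₀ : 0 ≤ s) (hs : s < 1)
    (hW : W = 1 / √(1 - s)) : 1 ≤ W ^ 2 := by
  have h_inv := inv_sq_eq_of_eq_one_div_sqrt hs hW
  have hW_pos : 0 < W ^ 2 := by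
    rw [← inv_pos, h_inv]
    linarith
  rw [← inv_le_one₀ hW_pos, h_inv]
  linarith

lemma real_inner_sq_le_norm_sq_mul_norm_sq {F : Type*} [NormedAddCommGroup F]
    [InnerProductSpace ℝ F] (x y : F) : inner ℝ x y ^ 2 ≤ ‖x‖ ^ 2 * ‖y‖ ^ 2 := by
  rw [← mul_pow, ← sq_abs]
  exact pow_le_pow_left₀ (abs_nonneg _) (abs_real_inner_le_norm x y) 2

theorem xi_star_upper_bound_general (ρ p h W E : ℝ) (v B : EuclideanSpace ℝ (Fin 3))
    (hρ : 0 < ρ)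
    (hh : Real.sqrt (1 + p ^ 2 / ρ ^ 2) + p / ρ ≤ h)
    (hv : ‖v‖ < 1)
    (hW : W = 1 / Real.sqrt (1 - ‖v‖ ^ 2))
    (hE : E = ρ * h * W ^ 2
      - (p + (1 / 2) * ((W ^ 2)⁻¹ * ‖B‖ ^ 2 + (inner ℝ v B : ℝ) ^ 2)) + ‖B‖ ^ 2) :
    ρ * h * W ^ 2 < 2 * E - ‖B‖ ^ 2 := by
  have hv_sq : ‖v‖ ^ 2 < 1 := pow_lt_one₀ (norm_nonneg v) hv two_ne_zero
  have hW_inv := inv_sq_eq_of_eq_one_div_sqrt hv_sq hW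
  have hW_ge := one_le_sq_of_eq_one_div_sqrt (sq_nonneg _) hv_sq hW
  obtain ⟨h_pos, hρh⟩ := enthalpy_pos_and_two_mul_pressure_lt hρ hh
  have hξ : 2 * p < ρ * h * W ^ 2 :=
    hρh.trans_le (le_mul_of_one_le_right (mul_pos hρ h_pos).le hW_ge)
  have hcs := real_inner_sq_le_norm_sq_mul_norm_sq v B
  have key : 2 * E - ‖B‖ ^ 2 - ρ * h * W ^ 2
      = (ρ * h * W ^ 2 - 2 * p) + (‖v‖ ^ 2 * ‖B‖ ^ 2 - inner ℝ v B ^ 2) := by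
    rw [hE, hW_inv]
    ring
  linarith

/-- Upper bound `ξ* = ρhW² < 2E − |B|²` for the RMHD root, under the
relativistic kinetic-theory bound on the specific enthalpy. -/
theorem xi_star_upper_bound (ρ p h W E : ℝ) (v B : EuclideanSpace ℝ (Fin 3))
    (hρ : 0 < ρ) (hp : 0 < p)
    (hh : Real.sqrt (1 + p ^ 2 / ρ ^ 2) + p / ρ ≤ h)
    (hv : ‖v‖ < 1)
    (hW : W = 1 / Real.sqrt (1 - ‖v‖ ^ 2))
    (hE : E = ρ * h * W ^ 2
      - (p + (1 / 2) * ((W ^ 2)⁻¹ * ‖B‖ ^ 2 + (inner ℝ v B : ℝ) ^ 2)) + ‖B‖ ^ 2) :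
    ρ * h * W ^ 2 < 2 * E - ‖B‖ ^ 2 :=
  xi_star_upper_bound_general ρ p h W E v B hρ hh hv hW hE
end
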